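/- With s = √ν, the mixed second derivative ∂²W/∂λ∂y(−1, s², 2s) equals 2s²(1−s)²(1 + 2s + 12s² − 18s³ − 13s⁴ − 8s⁵), and this is strictly positive for all s ∈ (0, 1/2) (equivalently ν ∈ (0, 1/4)). -/

import Mathlib

/-! At `ν = s²`, `λ = 2s` the mixed derivative factors as `2s²(1 - s)²` times a quintic, and on
`0 ≤ s < 1/2` the quintic is a sum of terms that are nonnegative because `2s < 1`, one of them,
`1 - 8s³`, strictly positive. -/

noncomputable def Wly (v l : ℝ) : ℝ :=
  2*v*(1 - 3*v - v^2 + 3*v^3 - 4*v*(1 + v^2)*l + 3*(1 + 3*v)*l^2 - 4*l^3)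

theorem Wly_sq_two_mul (s : ℝ) :
    Wly (s^2) (2*s) = 2*s^2*(1 - s)^2*(1 + 2*s + 12*s^2 - 18*s^3 - 13*s^4 - 8*s^5) := by
  unfold Wly
  ring

theorem quintic_pos {s : ℝ} (hs : 0 ≤ s) (hs' : s < 1/2) :
    0 < 1 + 2*s + 12*s^2 - 18*s^3 - 13*s^4 - 8*s^5 := by
  have h2s : 0 ≤ 1 - 2*s := by linarith
  have hcube : 8*s^3 < 1 := by
    have := pow_lt_pow_left₀ hs' hs three_ne_zero
    norm_num at this
    linarith
  have hdecomp : 1 + 2*s + 12*s^2 - 18*s^3 - 13*s^4 - 8*s^5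
      = (1 - 8*s^3) + 2*s*(1 - 2*s)*(1 + 2*s) + s^2*(1 - 2*s)
        + 4*s^2*(1 - 2*s)*(1 + 2*s) + s^2*(7 + 3*s^2 - 8*s^3) := by
    ring
  rw [hdecomp]
  have hterm₁ : 0 ≤ 2*s*(1 - 2*s)*(1 + 2*s) := by positivity
  have hterm₂ : 0 ≤ s^2*(1 - 2*s) := by positivity
  have hterm₃ : 0 ≤ 4*s^2*(1 - 2*s)*(1 + 2*s) := by positivity
  have hterm₄ : 0 ≤ s^2*(7 + 3*s^2 - 8*s^3) := mul_nonneg (sq_nonneg s) (by nlinarith)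
  linarith

theorem stmt12 (s : ℝ) :
    Wly (s^2) (2*s)
      = 2*s^2*(1 - s)^2*(1 + 2*s + 12*s^2 - 18*s^3 - 13*s^4 - 8*s^5) ∧
    (0 < s → s < 1/2 → 0 < Wly (s^2) (2*s)) := by
  refine ⟨Wly_sq_two_mul s, fun hs hs' => ?_⟩
  rw [Wly_sq_two_mul]
  have hfactor : 0 < 2*s^2*(1 - s)^2 := by
    have : 0 < 1 - s := by linarith
    positivity
  exact mul_pos hfactor (quintic_pos hs.le hs')
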